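/- For any two-qubit state ρ and any Bell-CHSH operator B = a·σ⊗(b+b')·σ + a'·σ⊗(b−b')·σ with unit vectors a,a',b,b' ∈ ℝ³, the expectation satisfies |Tr(Bρ)| ≤ 2√(M(ρ)); hence M(ρ) ≤ 1 implies |Tr(Bρ)| ≤ 2 for all such B. -/

import Mathlib

open Matrix Kronecker
open scoped ComplexOrder

/-- A 4×4 density matrix: positive semidefinite with trace one. -/
def IsDensity (ρ : Matrix (Fin 4) (Fin 4) ℂ) : Prop :=
  ρ.PosSemidef ∧ ρ.trace = 1

/-- Kronecker product of two 2×2 matrices as a 4×4 matrix, computational-basis order. -/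
def kron (A B : Matrix (Fin 2) (Fin 2) ℂ) : Matrix (Fin 4) (Fin 4) ℂ :=
  Matrix.reindex finProdFinEquiv finProdFinEquiv (A ⊗ₖ B)

/-- The Pauli matrices. -/
noncomputable def pauli : Fin 3 → Matrix (Fin 2) (Fin 2) ℂ
  | 0 => !![0, 1; 1, 0]
  | 1 => !![0, -Complex.I; Complex.I, 0]
  | 2 => !![1, 0; 0, -1]

/-- The correlation matrix of a two-qubit state. -/
noncomputable def corr (ρ : Matrix (Fin 4) (Fin 4) ℂ) : Matrix (Fin 3) (Fin 3) ℝ :=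
  Matrix.of fun i j => ((ρ * kron (pauli i) (pauli j)).trace).re

lemma transpose_mul_self_isHermitian (T : Matrix (Fin 3) (Fin 3) ℝ) :
    (Tᵀ * T).IsHermitian := by
  have h := Matrix.isHermitian_conjTranspose_mul_self T
  rwa [Matrix.conjTranspose_eq_transpose_of_trivial] at h

/-- `M(ρ)`: the sum of the two largest eigenvalues of `T_ρᵀ T_ρ`
(= sum of all three minus the smallest). -/
noncomputable def Mfun (ρ : Matrix (Fin 4) (Fin 4) ℂ) : ℝ :=
  (∑ i, (transpose_mul_self_isHermitian (corr ρ)).eigenvalues i) -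
    Finset.univ.inf' ⟨0, Finset.mem_univ 0⟩
      (transpose_mul_self_isHermitian (corr ρ)).eigenvalues

/-- The operator a·σ = Σᵢ aᵢ σᵢ. -/
noncomputable def dotPauli (a : Fin 3 → ℝ) : Matrix (Fin 2) (Fin 2) ℂ :=
  ∑ i, ((a i : ℝ) : ℂ) • pauli i

/- ======================  auxiliary lemmas  ====================== -/

-- Bessel-type inequality for two orthogonal vectors in ℝ³, coordinate form
lemma horodecki_bessel3 (x1 x2 x3 y1 y2 y3 : ℝ) (h : x1*y1 + x2*y2 + x3*y3 = 0) :
    (y1^2+y2^2+y3^2)*x1^2 + (x1^2+x2^2+x3^2)*y1^2 ≤ (x1^2+x2^2+x3^2)*(y1^2+y2^2+y3^2) := by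
  have h2 : x1 * y1 = -(x2*y2 + x3*y3) := by linarith
  have h3 : (x1*y1)^2 = (x2*y2 + x3*y3)^2 := by rw [h2]; ring
  nlinarith [sq_nonneg (x2*y3 - x3*y2)]

lemma horodecki_keyfin (X Y P Q M : ℝ) (hX : 0 ≤ X) (hY : 0 ≤ Y) (hM : 0 ≤ M) (hP : 0 ≤ P)
    (hQ : 0 ≤ Q) (h4 : P + Q = 4) (h1 : X ≤ M*P) (h2 : Y ≤ M*Q)
    (h3 : Q*X + P*Y ≤ M*(P*Q)) :
    Real.sqrt X + Real.sqrt Y ≤ 2 * Real.sqrt M := by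
  set x := Real.sqrt X with hx
  set y := Real.sqrt Y with hy
  have hx0 : 0 ≤ x := Real.sqrt_nonneg _
  have hy0 : 0 ≤ y := Real.sqrt_nonneg _
  have hxX : x^2 = X := Real.sq_sqrt hX
  have hyY : y^2 = Y := Real.sq_sqrt hY
  have hM2 : (2 * Real.sqrt M)^2 = 4 * M := by
    rw [mul_pow]; rw [Real.sq_sqrt hM]; ring
  have key : (x + y)^2 ≤ 4 * M := by
    rcases eq_or_lt_of_le hP with hP0 | hPpos
    · have hQ4 : Q = 4 := by linarith
      have hX0 : X = 0 := le_antisymm (by rw [← hP0] at h1; linarith) hX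
      have hx' : x = 0 := by rw [hx, hX0, Real.sqrt_zero]
      rw [hx', zero_add]
      rw [hyY]; rw [hQ4] at h2; linarith
    rcases eq_or_lt_of_le hQ with hQ0 | hQpos
    · have hP4 : P = 4 := by linarith
      have hY0 : Y = 0 := le_antisymm (by rw [← hQ0] at h2; linarith) hY
      have hy' : y = 0 := by rw [hy, hY0, Real.sqrt_zero]
      rw [hy', add_zero]
      rw [hxX]; rw [hP4] at h1; linarith
    · rw [← hxX, ← hyY] at h3
      have hPQ : 0 < P * Q := mul_pos hPpos hQpos
      have hexp : P*Q*(x+y)^2 ≤ (P+Q)*(Q*x^2+P*y^2) := by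
        nlinarith [sq_nonneg (Q*x - P*y)]
      have h5 : P*Q*(x+y)^2 ≤ P*Q*(4*M) := by
        rw [h4] at hexp; nlinarith [h3]
      exact (mul_le_mul_iff_right₀ hPQ).mp h5
  calc x + y = Real.sqrt ((x+y)^2) := by rw [Real.sqrt_sq (by linarith)]
    _ ≤ Real.sqrt ((2*Real.sqrt M)^2) := by
        apply Real.sqrt_le_sqrt; rw [hM2]; exact key
    _ = 2 * Real.sqrt M := Real.sqrt_sq (by positivity)

set_option maxHeartbeats 1000000 in
lemma horodecki_master (lam p q : Fin 3 → ℝ) (m : ℝ)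
    (hl : ∀ i, 0 ≤ lam i) (hm : ∀ i, m ≤ lam i) (hm0 : 0 ≤ m)
    (hP4 : (∑ i, p i^2) + (∑ i, q i^2) = 4) (hpq : ∑ i, p i * q i = 0) :
    Real.sqrt (∑ i, lam i * p i^2) + Real.sqrt (∑ i, lam i * q i^2)
      ≤ 2 * Real.sqrt ((∑ i, lam i) - m) := by
  simp only [Fin.sum_univ_three] at *
  have hl0 := hl 0; have hl1 := hl 1; have hl2 := hl 2
  have hm1 := hm 0; have hm2 := hm 1; have hm3 := hm 2
  apply horodecki_keyfin _ _ (p 0 ^2 + p 1 ^2 + p 2 ^2) (q 0 ^2 + q 1 ^2 + q 2 ^2) _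
    (by positivity) (by positivity) (by linarith) (by positivity) (by positivity) hP4
  · nlinarith [mul_nonneg (sub_nonneg.2 hm2) (sq_nonneg (p 0)),
      mul_nonneg hl2 (sq_nonneg (p 0)),
      mul_nonneg (sub_nonneg.2 hm1) (sq_nonneg (p 1)),
      mul_nonneg hl2 (sq_nonneg (p 1)),
      mul_nonneg (sub_nonneg.2 hm1) (sq_nonneg (p 2)),
      mul_nonneg hl1 (sq_nonneg (p 2))]
  · nlinarith [mul_nonneg (sub_nonneg.2 hm2) (sq_nonneg (q 0)),
      mul_nonneg hl2 (sq_nonneg (q 0)),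
      mul_nonneg (sub_nonneg.2 hm1) (sq_nonneg (q 1)),
      mul_nonneg hl2 (sq_nonneg (q 1)),
      mul_nonneg (sub_nonneg.2 hm1) (sq_nonneg (q 2)),
      mul_nonneg hl1 (sq_nonneg (q 2))]
  · have ht0 := horodecki_bessel3 (p 0) (p 1) (p 2) (q 0) (q 1) (q 2) hpq
    have ht1 := horodecki_bessel3 (p 1) (p 2) (p 0) (q 1) (q 2) (q 0) (by linarith)
    have ht2 := horodecki_bessel3 (p 2) (p 0) (p 1) (q 2) (q 0) (q 1) (by linarith)
    have c0 : 0 ≤ (lam 0 - m) * ((p 0^2+p 1^2+p 2^2)*(q 0^2+q 1^2+q 2^2)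
        - ((q 0^2+q 1^2+q 2^2) * p 0^2 + (p 0^2+p 1^2+p 2^2) * q 0^2)) :=
      mul_nonneg (by linarith) (by linarith [ht0])
    have c1 : 0 ≤ (lam 1 - m) * ((p 0^2+p 1^2+p 2^2)*(q 0^2+q 1^2+q 2^2)
        - ((q 0^2+q 1^2+q 2^2) * p 1^2 + (p 0^2+p 1^2+p 2^2) * q 1^2)) :=
      mul_nonneg (by linarith) (by linarith [ht1])
    have c2 : 0 ≤ (lam 2 - m) * ((p 0^2+p 1^2+p 2^2)*(q 0^2+q 1^2+q 2^2)
        - ((q 0^2+q 1^2+q 2^2) * p 2^2 + (p 0^2+p 1^2+p 2^2) * q 2^2)) :=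
      mul_nonneg (by linarith) (by linarith [ht2])
    linarith [c0, c1, c2]

lemma horodecki_star_trans (U : Matrix (Fin 3) (Fin 3) ℝ) : star U = Uᵀ := by
  rw [star_eq_conjTranspose, conjTranspose_eq_transpose_of_trivial]

lemma horodecki_coords (S : Matrix (Fin 3) (Fin 3) ℝ) (hS : S.IsHermitian) :
    ∃ p : (Fin 3 → ℝ) → (Fin 3 → ℝ),
      (∀ c d : Fin 3 → ℝ, ∑ i, p c i * p d i = ∑ i, c i * d i) ∧
      (∀ c : Fin 3 → ℝ, c ⬝ᵥ (S *ᵥ c) = ∑ i, hS.eigenvalues i * (p c i)^2) := by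
  set U : Matrix (Fin 3) (Fin 3) ℝ := (hS.eigenvectorUnitary : Matrix (Fin 3) (Fin 3) ℝ) with hU
  have hU1 : U * star U = 1 := Unitary.mul_star_self_of_mem hS.eigenvectorUnitary.2
  refine ⟨fun c => Uᵀ *ᵥ c, ?_, ?_⟩
  · intro c d
    have h1 : (Uᵀ *ᵥ c) ⬝ᵥ (Uᵀ *ᵥ d) = c ⬝ᵥ d := by
      rw [mulVec_transpose, ← dotProduct_mulVec, mulVec_mulVec, ← horodecki_star_trans, hU1,
        one_mulVec]
    simpa [dotProduct] using h1
  · intro c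
    conv_lhs => rw [hS.spectral_theorem, Unitary.conjStarAlgAut_apply, ← hU]
    rw [← mulVec_mulVec, ← mulVec_mulVec, dotProduct_mulVec (A := U), ← mulVec_transpose,
      horodecki_star_trans]
    simp only [dotProduct, mulVec_diagonal]
    refine Finset.sum_congr rfl fun i _ => ?_
    simp [RCLike.ofReal]
    ring

lemma horodecki_kron_expand (a c : Fin 3 → ℝ) :
    kron (dotPauli a) (dotPauli c)
      = ∑ i, ∑ j, ((a i * c j : ℝ) : ℂ) • kron (pauli i) (pauli j) := by
  ext x y
  simp only [kron, dotPauli, reindex_apply, submatrix_apply, Matrix.sum_apply,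
    Matrix.smul_apply, kroneckerMap_apply, smul_eq_mul, Complex.ofReal_mul,
    Finset.sum_apply]
  rw [Finset.sum_mul_sum]
  exact Finset.sum_congr rfl fun i _ => Finset.sum_congr rfl fun j _ => by ring

lemma horodecki_trace_bilin (a c : Fin 3 → ℝ) (ρ : Matrix (Fin 4) (Fin 4) ℂ) :
    (((kron (dotPauli a) (dotPauli c)) * ρ).trace).re
      = ∑ i, ∑ j, a i * c j * corr ρ i j := by
  rw [horodecki_kron_expand]
  rw [Finset.sum_mul, trace_sum, Complex.re_sum]
  refine Finset.sum_congr rfl fun i _ => ?_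
  rw [Finset.sum_mul, trace_sum, Complex.re_sum]
  refine Finset.sum_congr rfl fun j _ => ?_
  rw [smul_mul_assoc, trace_smul, trace_mul_comm]
  simp [corr, Complex.re_ofReal_mul]

-- Cauchy–Schwarz step
lemma horodecki_cs (a y : Fin 3 → ℝ) (ha : ∑ i, a i ^ 2 = 1) :
    |∑ i, a i * y i| ≤ Real.sqrt (∑ i, y i ^ 2) := by
  have h := Finset.sum_mul_sq_le_sq_mul_sq Finset.univ a y
  rw [ha, one_mul] at h
  rw [← Real.sqrt_sq_eq_abs]
  exact Real.sqrt_le_sqrt h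

/-- the Horodecki bound |Tr(Bρ)| ≤ 2√M(ρ) for every Bell-CHSH operator
B = a·σ⊗(b+b')·σ + a'·σ⊗(b−b')·σ; hence M(ρ) ≤ 1 implies |Tr(Bρ)| ≤ 2. -/
theorem horodecki_bound (a a' b b' : Fin 3 → ℝ)
    (ha : ∑ i, a i ^ 2 = 1) (ha' : ∑ i, a' i ^ 2 = 1)
    (hb : ∑ i, b i ^ 2 = 1) (hb' : ∑ i, b' i ^ 2 = 1)
    (ρ : Matrix (Fin 4) (Fin 4) ℂ) (hρ : IsDensity ρ) :
    |(((kron (dotPauli a) (dotPauli (b + b')) +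
          kron (dotPauli a') (dotPauli (b - b'))) * ρ).trace).re| ≤
        2 * Real.sqrt (Mfun ρ) ∧
      (Mfun ρ ≤ 1 →
        |(((kron (dotPauli a) (dotPauli (b + b')) +
            kron (dotPauli a') (dotPauli (b - b'))) * ρ).trace).re| ≤ 2) := by
  have main : |(((kron (dotPauli a) (dotPauli (b + b')) +
      kron (dotPauli a') (dotPauli (b - b'))) * ρ).trace).re| ≤ 2 * Real.sqrt (Mfun ρ) := by
    set T : Matrix (Fin 3) (Fin 3) ℝ := corr ρ with hT
    have hS := transpose_mul_self_isHermitian T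
    set lam := hS.eigenvalues with hlam
    -- eigenvalues are nonnegative
    have hPSD : (Tᵀ * T).PosSemidef := by
      have h := Matrix.posSemidef_conjTranspose_mul_self T
      rwa [conjTranspose_eq_transpose_of_trivial] at h
    have hl : ∀ i, 0 ≤ lam i := fun i => hPSD.eigenvalues_nonneg i
    set m : ℝ := Finset.univ.inf' ⟨0, Finset.mem_univ 0⟩ lam with hmdef
    have hm : ∀ i, m ≤ lam i := fun i => Finset.inf'_le _ (Finset.mem_univ i)
    have hm0 : 0 ≤ m := Finset.le_inf' _ _ fun i _ => hl i
    -- coordinates in the eigenbasis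
    obtain ⟨p, hiso, hquad⟩ := horodecki_coords (Tᵀ * T) hS
    -- the two vectors
    set c : Fin 3 → ℝ := fun i => b i + b' i with hc
    set d : Fin 3 → ℝ := fun i => b i - b' i with hd
    -- quadratic forms as ∑ Tᵢⱼ products
    have hquad' : ∀ w : Fin 3 → ℝ,
        ∑ i, (∑ j, T i j * w j)^2 = ∑ i, lam i * (p w i)^2 := by
      intro w
      have h1 : (T *ᵥ w) ⬝ᵥ (T *ᵥ w) = w ⬝ᵥ ((Tᵀ * T) *ᵥ w) := by
        rw [← mulVec_mulVec, dotProduct_mulVec (A := Tᵀ), vecMul_transpose]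
      have h2 := hquad w
      rw [← h2, ← h1]
      simp [dotProduct, mulVec, sq]
    -- norms of the coordinates
    have hnorm : ∀ w : Fin 3 → ℝ, ∑ i, (p w i)^2 = ∑ i, (w i)^2 := by
      intro w
      have := hiso w w
      simpa [sq] using this
    have hiso' : ∑ i, p c i * p d i = 0 := by
      rw [hiso c d]
      simp only [hc, hd, Fin.sum_univ_three] at *
      nlinarith [hb, hb']
    have hP4 : (∑ i, (p c i)^2) + (∑ i, (p d i)^2) = 4 := by
      rw [hnorm c, hnorm d]
      simp only [hc, hd, Fin.sum_univ_three] at *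
      nlinarith [hb, hb']
    -- master inequality
    have hmaster := horodecki_master lam (p c) (p d) m hl hm hm0 hP4 hiso'
    -- trace identities
    have e1 := horodecki_trace_bilin a c ρ
    have e2 := horodecki_trace_bilin a' d ρ
    have hcc : (b + b') = c := rfl
    have hdd : (b - b') = d := rfl
    have esplit : (((kron (dotPauli a) (dotPauli (b + b')) +
        kron (dotPauli a') (dotPauli (b - b'))) * ρ).trace).re
        = (∑ i, ∑ j, a i * c j * corr ρ i j) + (∑ i, ∑ j, a' i * d j * corr ρ i j) := by
      rw [hcc, hdd, add_mul, trace_add, Complex.add_re, e1, e2]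
    -- Cauchy–Schwarz for each term
    have cs1 : |∑ i, ∑ j, a i * c j * corr ρ i j|
        ≤ Real.sqrt (∑ i, (∑ j, T i j * c j)^2) := by
      have hre : ∑ i, ∑ j, a i * c j * corr ρ i j = ∑ i, a i * (∑ j, T i j * c j) := by
        refine Finset.sum_congr rfl fun i _ => ?_
        rw [Finset.mul_sum]
        exact Finset.sum_congr rfl fun j _ => by rw [hT]; ring
      rw [hre]
      exact horodecki_cs a _ ha
    have cs2 : |∑ i, ∑ j, a' i * d j * corr ρ i j|
        ≤ Real.sqrt (∑ i, (∑ j, T i j * d j)^2) := by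
      have hre : ∑ i, ∑ j, a' i * d j * corr ρ i j = ∑ i, a' i * (∑ j, T i j * d j) := by
        refine Finset.sum_congr rfl fun i _ => ?_
        rw [Finset.mul_sum]
        exact Finset.sum_congr rfl fun j _ => by rw [hT]; ring
      rw [hre]
      exact horodecki_cs a' _ ha'
    have hMfun : Mfun ρ = (∑ i, lam i) - m := rfl
    rw [esplit, hMfun]
    calc |(∑ i, ∑ j, a i * c j * corr ρ i j) + (∑ i, ∑ j, a' i * d j * corr ρ i j)|
        ≤ |∑ i, ∑ j, a i * c j * corr ρ i j| + |∑ i, ∑ j, a' i * d j * corr ρ i j| :=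
          abs_add_le _ _
      _ ≤ Real.sqrt (∑ i, (∑ j, T i j * c j)^2) + Real.sqrt (∑ i, (∑ j, T i j * d j)^2) :=
          add_le_add cs1 cs2
      _ = Real.sqrt (∑ i, lam i * (p c i)^2) + Real.sqrt (∑ i, lam i * (p d i)^2) := by
          rw [hquad' c, hquad' d]
      _ ≤ 2 * Real.sqrt ((∑ i, lam i) - m) := hmaster
  refine ⟨main, fun hM1 => ?_⟩
  calc |(((kron (dotPauli a) (dotPauli (b + b')) +
        kron (dotPauli a') (dotPauli (b - b'))) * ρ).trace).re|
      ≤ 2 * Real.sqrt (Mfun ρ) := main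
    _ ≤ 2 * Real.sqrt 1 := by
        have := Real.sqrt_le_sqrt hM1
        linarith
    _ = 2 := by rw [Real.sqrt_one]; ring
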